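/- arXiv:0807.0289 — 2 statements merged into one kernel-verified Lean document; each statement's English description precedes it below -/
import Mathlib

section
/- Let ρ̂ ∈ 𝒮(ℝ³, ℂ) be not identically zero and compactly supported, and define N(ρ̂, ε)² = (2π)^{-3} ∫ (2E_p)^{-1} |ρ̂(εp)|² d³p with E_p = √(m²+|p|²), m > 0. Then for all ε ∈ (0,1], N(ρ̂, ε)² is finite and positive, and there exist constants 0 < c ≤ C with c/ε² ≤ N(ρ̂, ε)² ≤ C/ε², i.e. N(ρ̂, ε) = Θ(1/ε) as ε → 0⁺. -/
/-! After the substitution `s = ε • p` the integral equals `ε⁻³ ∫ (2 E_{s/ε})⁻¹ |ρ̂ s|² ds`.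
For `ε ≤ 1` the energy obeys `|s|/ε ≤ E_{s/ε} ≤ (m + |s|)/ε`, which squeezes the integral between
`ε⁻² ∫ (2 (m + |s|))⁻¹ |ρ̂ s|² ds` and `ε⁻² ∫ (2 |s|)⁻¹ |ρ̂ s|² ds`. The first constant is positive
because `ρ̂ ≠ 0` is continuous; the second is finite because `|s|⁻¹` is locally integrable in
dimension `3 ≥ 2`. -/

open MeasureTheory Module Set Real

theorem sqrt_sq_add_sq_le_add {m t : ℝ} (hm : 0 ≤ m) (ht : 0 ≤ t) : √(m ^ 2 + t ^ 2) ≤ m + t :=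
  (sqrt_le_left (by positivity)).2 (by nlinarith)

theorem le_sqrt_sq_add_sq (m t : ℝ) : t ≤ √(m ^ 2 + t ^ 2) :=
  (le_abs_self t).trans (abs_le_sqrt (by nlinarith))

theorem mul_inv_two_mul_eq (ε x : ℝ) : ε * (2 * x)⁻¹ = (2 * (ε⁻¹ * x))⁻¹ := by
  simp only [mul_inv, inv_inv]; ring

theorem mul_inv_two_add_le_inv_two_sqrt {m t ε : ℝ} (hm : 0 < m) (ht : 0 ≤ t)
    (hε0 : 0 < ε) (hε1 : ε ≤ 1) : ε * (2 * (m + t))⁻¹ ≤ (2 * √(m ^ 2 + (ε⁻¹ * t) ^ 2))⁻¹ := by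
  have hε' : 1 ≤ ε⁻¹ := (one_le_inv₀ hε0).2 hε1
  rw [mul_inv_two_mul_eq]
  refine inv_anti₀ (by positivity) ?_
  calc 2 * √(m ^ 2 + (ε⁻¹ * t) ^ 2) ≤ 2 * (m + ε⁻¹ * t) := by
        gcongr; exact sqrt_sq_add_sq_le_add hm.le (by positivity)
    _ ≤ 2 * (ε⁻¹ * (m + t)) := by nlinarith

theorem inv_two_sqrt_le_mul_inv_two {m t ε : ℝ} (ht : 0 < t) (hε : 0 < ε) :
    (2 * √(m ^ 2 + (ε⁻¹ * t) ^ 2))⁻¹ ≤ ε * (2 * t)⁻¹ := by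
  rw [mul_inv_two_mul_eq]
  exact inv_anti₀ (by positivity) (by gcongr; exact le_sqrt_sq_add_sq m _)

theorem integral_inv_two_add_norm_mul_pos {E : Type*} [NormedAddCommGroup E] [MeasurableSpace E]
    [BorelSpace E] {μ : Measure E} [μ.IsOpenPosMeasure] [IsFiniteMeasureOnCompacts μ] {m : ℝ}
    (hm : 0 < m) {φ : E → ℝ} (hφ : Continuous φ)
    (hcs : HasCompactSupport φ) (hφ0 : 0 ≤ φ) {x : E} (hx : φ x ≠ 0) :
    0 < ∫ s, (2 * (m + ‖s‖))⁻¹ * φ s ∂μ :=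
  have hpos : ∀ s : E, 0 < 2 * (m + ‖s‖) := fun s => by positivity
  ((continuous_const.mul (continuous_const.add continuous_norm)).inv₀ (fun s => (hpos s).ne')
    |>.mul hφ).integral_pos_of_hasCompactSupport_nonneg_nonzero hcs.mul_left
    (fun s => mul_nonneg (inv_nonneg.2 (hpos s).le) (hφ0 s))
    (mul_ne_zero (inv_ne_zero (hpos x).ne') hx)

section HaarMeasure

variable {E : Type*} [NormedAddCommGroup E] [NormedSpace ℝ E] [FiniteDimensional ℝ E]
  [MeasurableSpace E] [BorelSpace E] {μ : Measure E} [μ.IsAddHaarMeasure]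

theorem integrable_inv_two_norm_mul (hd : 2 ≤ finrank ℝ E) {φ : E → ℝ} (hφ : Continuous φ)
    (hcs : HasCompactSupport φ) : Integrable (fun x => (2 * ‖x‖)⁻¹ * φ x) μ := by
  have hloc : LocallyIntegrable (fun x : E => (2 * ‖x‖)⁻¹) μ :=
    locallyIntegrable_of_norm_le_rpow (by omega) (C := 2⁻¹) (α := 1) (by norm_cast)
      (ae_of_all _ fun x => by simp [rpow_neg_one, mul_comm]) (by fun_prop)
  exact hloc.integrable_smul_right_of_hasCompactSupport hφ hcs

theorem integral_inv_two_sqrt_mul_comp_smul_mem_Icc (hd : 2 ≤ finrank ℝ E) {m : ℝ} (hm : 0 < m)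
    {φ : E → ℝ} (hφ : Continuous φ) (hcs : HasCompactSupport φ) (hφ0 : 0 ≤ φ) {ε : ℝ}
    (hε0 : 0 < ε) (hε1 : ε ≤ 1) :
    ∫ p, (2 * √(m ^ 2 + ‖p‖ ^ 2))⁻¹ * φ (ε • p) ∂μ ∈
      Icc ((∫ s, (2 * (m + ‖s‖))⁻¹ * φ s ∂μ) / ε ^ (finrank ℝ E - 1))
        ((∫ s, (2 * ‖s‖)⁻¹ * φ s ∂μ) / ε ^ (finrank ℝ E - 1)) := by
  set w : E → ℝ := fun s => (2 * √(m ^ 2 + (ε⁻¹ * ‖s‖) ^ 2))⁻¹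
  have hw : Continuous w :=
    (continuous_const.mul
      (continuous_const.add ((continuous_const.mul continuous_norm).pow 2)).sqrt).inv₀
      fun s => (mul_pos two_pos
        (sqrt_pos.2 (add_pos_of_pos_of_nonneg (pow_pos hm 2) (sq_nonneg _)))).ne'
  have hscale : ∫ p, (2 * √(m ^ 2 + ‖p‖ ^ 2))⁻¹ * φ (ε • p) ∂μ =
      (ε ^ finrank ℝ E)⁻¹ * ∫ s, w s * φ s ∂μ := by
    rw [eq_inv_mul_iff_mul_eq₀ (by positivity : ε ^ finrank ℝ E ≠ 0), ← smul_eq_mul,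
      ← Measure.integral_comp_inv_smul_of_nonneg μ _ hε0.le]
    simp [w, norm_smul, smul_smul, hε0.ne', abs_of_pos hε0]
  have hdiv : ∀ I, I / ε ^ (finrank ℝ E - 1) = (ε ^ finrank ℝ E)⁻¹ * (ε * I) := by
    intro I
    rw [← Nat.sub_add_cancel (one_le_two.trans hd), pow_succ, Nat.add_sub_cancel]
    field_simp [hε0.ne']
  have hmid : Integrable (fun s => w s * φ s) μ :=
    (hw.mul hφ).integrable_of_hasCompactSupport hcs.mul_left
  rw [hscale, hdiv, hdiv]
  have hinv : 0 ≤ (ε ^ finrank ℝ E)⁻¹ := by positivity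
  refine ⟨mul_le_mul_of_nonneg_left ?_ hinv, mul_le_mul_of_nonneg_left ?_ hinv⟩ <;>
    rw [← integral_const_mul]
  · refine integral_mono_of_nonneg (ae_of_all _ fun s => ?_) hmid (ae_of_all _ fun s => ?_)
    · exact mul_nonneg hε0.le (mul_nonneg (by positivity) (hφ0 s))
    · dsimp only
      rw [← mul_assoc]
      exact mul_le_mul_of_nonneg_right
        (mul_inv_two_add_le_inv_two_sqrt hm (norm_nonneg s) hε0 hε1) (hφ0 s)
  · refine integral_mono_of_nonneg (ae_of_all _ fun s => ?_)
      ((integrable_inv_two_norm_mul hd hφ hcs).const_mul ε) ?_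
    · exact mul_nonneg (inv_nonneg.2 (by positivity)) (hφ0 s)
    · have : Nontrivial E := Module.nontrivial_of_finrank_pos (R := ℝ) (by omega)
      filter_upwards [μ.ae_ne 0] with s hs
      rw [← mul_assoc]
      exact mul_le_mul_of_nonneg_right
        (inv_two_sqrt_le_mul_inv_two (norm_pos_iff.2 hs) hε0) (hφ0 s)

end HaarMeasure

/-- The regularized squared norm
`N(ρ̂, ε)² = (2π)^{-3} ∫ (2E_p)^{-1} |ρ̂(εp)|² d³p`, `E_p = √(m² + |p|²)`,
of the embedded one-particle state: for `ρ̂` Schwartz, compactly supported and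
not identically zero, it is finite and positive, with two-sided bounds
`c/ε² ≤ N(ρ̂, ε)² ≤ C/ε²` for `ε ∈ (0,1]`, i.e. `N(ρ̂, ε) = Θ(1/ε)`. -/
theorem stmt_11 (m : ℝ) (hm : 0 < m)
    (ρhat : SchwartzMap (EuclideanSpace ℝ (Fin 3)) ℂ)
    (hcs : HasCompactSupport (ρhat : EuclideanSpace ℝ (Fin 3) → ℂ))
    (hne : ρhat ≠ 0) :
    ∃ c C : ℝ, 0 < c ∧ c ≤ C ∧ ∀ ε ∈ Set.Ioc (0 : ℝ) 1,
      c / ε ^ 2 ≤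
        ((2 * Real.pi) ^ 3)⁻¹ *
          (∫ p : EuclideanSpace ℝ (Fin 3),
            (2 * Real.sqrt (m ^ 2 + ‖p‖ ^ 2))⁻¹ * ‖ρhat (ε • p)‖ ^ 2) ∧
      ((2 * Real.pi) ^ 3)⁻¹ *
          (∫ p : EuclideanSpace ℝ (Fin 3),
            (2 * Real.sqrt (m ^ 2 + ‖p‖ ^ 2))⁻¹ * ‖ρhat (ε • p)‖ ^ 2)
        ≤ C / ε ^ 2 := by
  set φ : EuclideanSpace ℝ (Fin 3) → ℝ := fun s => ‖ρhat s‖ ^ 2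
  have hφ : Continuous φ := by fun_prop
  have hφcs : HasCompactSupport φ := hcs.comp_left (g := fun z : ℂ => ‖z‖ ^ 2) (by simp)
  have hφ0 : 0 ≤ φ := fun s => sq_nonneg ‖ρhat s‖
  obtain ⟨x, hx⟩ : ∃ x, ρhat x ≠ 0 := by
    by_contra! h
    exact hne (SchwartzMap.ext h)
  have hd : finrank ℝ (EuclideanSpace ℝ (Fin 3)) = 3 := finrank_euclideanSpace_fin
  have hφx : φ x ≠ 0 := by simpa [φ] using hx
  have hK : (0 : ℝ) ≤ ((2 * π) ^ 3)⁻¹ := by positivity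
  have key : ∀ ε ∈ Ioc (0 : ℝ) 1,
      ((2 * π) ^ 3)⁻¹ * (∫ s, (2 * (m + ‖s‖))⁻¹ * φ s) / ε ^ 2 ≤
        ((2 * π) ^ 3)⁻¹ * ∫ p, (2 * √(m ^ 2 + ‖p‖ ^ 2))⁻¹ * φ (ε • p) ∧
      ((2 * π) ^ 3)⁻¹ * ∫ p, (2 * √(m ^ 2 + ‖p‖ ^ 2))⁻¹ * φ (ε • p) ≤
        ((2 * π) ^ 3)⁻¹ * (∫ s, (2 * ‖s‖)⁻¹ * φ s) / ε ^ 2 := by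
    rintro ε ⟨hε0, hε1⟩
    have h := integral_inv_two_sqrt_mul_comp_smul_mem_Icc (μ := volume)
      (by rw [hd]; norm_num) hm hφ hφcs hφ0 hε0 hε1
    rw [hd] at h
    simp only [mul_div_assoc]
    exact ⟨mul_le_mul_of_nonneg_left h.1 hK, mul_le_mul_of_nonneg_left h.2 hK⟩
  refine ⟨_, _, mul_pos (by positivity) (integral_inv_two_add_norm_mul_pos hm hφ hφcs hφ0 hφx),
    ?_, key⟩
  have h := key 1 ⟨one_pos, le_rfl⟩
  simp only [one_pow, div_one] at h
  exact h.1.trans h.2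
end

section
/- Iterative (Dyson) expansion with remainder estimate: let H_I(t) be a family of linear operators from a normed space (𝔽, ‖·‖) into normed spaces 𝐅_{𝔅ₙ} such that ‖H_I(t)‖ ≤ 1 as a map 𝔽 → 𝐅_{𝔅₀} and H_I(t) maps 𝔅_{n−1}-bounded sets into 𝔅ₙ-bounded sets uniformly in t. Suppose S_g(t)Φ solves S_g'(t)Φ = −i g H_I(t) S_g(t)Φ with S_g(τ) = 1 and ‖S_g(t)Φ‖_𝔽 = ‖Φ‖_𝔽. Define S_[0] = 1 and S_[n](t) = −i ∫_τ^t H_I(u) S_[n−1](u) du. Then for every n, ‖(S_g(t) − Σ_{k=0}^n g^k S_[k](t))Φ‖_{𝔅ₙ} ≤ g^{n+1} ((t−τ)^{n+1}/(n+1)!) ‖Φ‖_𝔽. -/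
open MeasureTheory intervalIntegral Finset

/-!
Write `R_n(t) = S(t) - ∑_{k<n} g^k S_[k](t)`, so that `R_0 = S` and the claim bounds `R_{n+1}`.
The fundamental theorem of calculus for `S` together with the recursion for `S_[k]` gives
`R_{n+1}(t) = ∫_τ^t (-i g) H_I(u) R_n(u) du`. A continuous seminorm passes inside the integral
(Jensen's inequality), and `N_n ∘ H_I(u) ≤ N_{n-1}` (resp. `N_0 ∘ H_I(u) ≤ ‖·‖` with
`‖S(u)‖ = ‖Φ‖`) turns the bound `g^n (u-τ)^n/n! ‖Φ‖` on `R_n` into the next one by one integration.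
-/

theorem Seminorm.map_integral_le {α : Type*} [MeasurableSpace α] {μ : Measure α}
    [IsFiniteMeasure μ] {E : Type*} [NormedAddCommGroup E] [NormedSpace ℝ E]
    [CompleteSpace E] (p : Seminorm ℝ E) (hp : Continuous p) {f : α → E}
    (hf : Integrable f μ) : p (∫ x, f x ∂μ) ≤ ∫ x, p (f x) ∂μ := by
  rcases eq_zero_or_neZero μ with rfl | hμ
  · simp
  obtain ⟨C, -, hC⟩ := p.bound_of_continuous_normedSpace hp
  have hpf : Integrable (p ∘ f) μ :=
    hf.norm.const_mul C |>.mono' (hp.comp_aestronglyMeasurable hf.1) <|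
      .of_forall fun x => by simpa [abs_of_nonneg (apply_nonneg p _)] using hC (f x)
  have hJensen := p.convexOn.map_average_le hp.continuousOn isClosed_univ
    (.of_forall fun _ => Set.mem_univ _) hf hpf
  have hmass : 0 < μ.real Set.univ := measureReal_univ_pos
  rw [average_eq, average_eq, smul_eq_mul, map_smul_eq_mul, Real.norm_of_nonneg (by positivity),
    mul_le_mul_iff_right₀ (by positivity)] at hJensen
  exact hJensen

theorem Seminorm.intervalIntegral_le {E : Type*} [NormedAddCommGroup E] [NormedSpace ℝ E]
    [CompleteSpace E] (p : Seminorm ℝ E) (hp : Continuous p) {f : ℝ → E} {a b : ℝ}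
    (hf : IntervalIntegrable f volume a b) (hab : a ≤ b) :
    p (∫ u in a..b, f u) ≤ ∫ u in a..b, p (f u) := by
  rw [integral_of_le hab, integral_of_le hab]
  exact p.map_integral_le hp hf.1

theorem integral_sub_pow_div_factorial (a b : ℝ) (n : ℕ) :
    ∫ u in a..b, (u - a) ^ n / n.factorial = (b - a) ^ (n + 1) / (n + 1).factorial := by
  rw [intervalIntegral.integral_div, integral_comp_sub_right (· ^ n), integral_pow,
    Nat.factorial_succ]
  push_cast
  field_simp
  ring

section

variable {E : Type*} [NormedAddCommGroup E] [NormedSpace ℂ E]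

theorem continuous_apply_sub_sum (HI : ℝ → E →ₗ[ℂ] E) {S : ℝ → E} {Sn : ℕ → ℝ → E}
    (hScont : Continuous fun u => HI u (S u)) (hSncont : ∀ k, Continuous fun u => HI u (Sn k u))
    (s : Finset ℕ) (c : ℕ → ℂ) : Continuous fun u => HI u (S u - ∑ k ∈ s, c k • Sn k u) := by
  simp only [map_sub, map_sum, map_smul]
  exact hScont.sub (continuous_finsetSum _ fun k _ => (hSncont k).const_smul _)

variable [CompleteSpace E]

theorem Seminorm.intervalIntegral_smul_le_of_le_pow_div_factorial (p : Seminorm ℂ E)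
    (hp : Continuous p) (c : ℂ) {f : ℝ → E} (hf : Continuous f) {τ t C : ℝ} (n : ℕ)
    (ht : τ ≤ t) (hbd : ∀ u ∈ Set.Icc τ t, p (f u) ≤ C * ((u - τ) ^ n / n.factorial)) :
    p (∫ u in τ..t, c • f u) ≤ ‖c‖ * C * ((t - τ) ^ (n + 1) / (n + 1).factorial) := by
  calc p (∫ u in τ..t, c • f u) = ‖c‖ * p (∫ u in τ..t, f u) := by
        rw [intervalIntegral.integral_smul, map_smul_eq_mul]
    _ ≤ ‖c‖ * ∫ u in τ..t, p (f u) := by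
        gcongr
        exact (p.restrictScalars ℝ).intervalIntegral_le hp (hf.intervalIntegrable _ _) ht
    _ ≤ ‖c‖ * ∫ u in τ..t, C * ((u - τ) ^ n / n.factorial) := by
        gcongr
        have hB : Continuous fun u : ℝ => C * ((u - τ) ^ n / n.factorial) := by fun_prop
        exact integral_mono_on ht ((hp.comp hf).intervalIntegrable _ _)
          (hB.intervalIntegrable _ _) hbd
    _ = ‖c‖ * C * ((t - τ) ^ (n + 1) / (n + 1).factorial) := by
        rw [intervalIntegral.integral_const_mul, integral_sub_pow_div_factorial, mul_assoc]

theorem dyson_remainder_succ_eq_integral (HI : ℝ → E →ₗ[ℂ] E) (g : ℂ) (τ : ℝ) {S : ℝ → E}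
    {Sn : ℕ → ℝ → E} (hS : ∀ t, HasDerivAt S (-(g • (Complex.I • HI t (S t)))) t)
    (hScont : Continuous fun u => HI u (S u)) (hSn0 : ∀ t, Sn 0 t = S τ)
    (hSnrec : ∀ n t, Sn (n + 1) t = -(Complex.I • ∫ u in τ..t, HI u (Sn n u)))
    (hSncont : ∀ n, Continuous fun u => HI u (Sn n u)) (n : ℕ) (t : ℝ) :
    S t - ∑ k ∈ range (n + 1), g ^ k • Sn k t
      = ∫ u in τ..t, (-Complex.I * g) • HI u (S u - ∑ k ∈ range n, g ^ k • Sn k u) := by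
  have hS' : ∀ u, HasDerivAt S ((-Complex.I * g) • HI u (S u)) u := fun u => by
    convert hS u using 1
    module
  have hcont : ∀ k, Continuous fun u => (-Complex.I * g) • HI u (g ^ k • Sn k u) := fun k => by
    simp only [map_smul]
    exact ((hSncont k).const_smul _).const_smul _
  calc S t - ∑ k ∈ range (n + 1), g ^ k • Sn k t
      = (S t - S τ) - ∑ k ∈ range n, g ^ (k + 1) • Sn (k + 1) t := by
        rw [sum_range_succ', pow_zero, one_smul, hSn0]; abel
    _ = (∫ u in τ..t, (-Complex.I * g) • HI u (S u))
          - ∑ k ∈ range n, ∫ u in τ..t, (-Complex.I * g) • HI u (g ^ k • Sn k u) := by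
        congr 1
        · exact (integral_eq_sub_of_hasDerivAt (fun u _ => hS' u)
            ((hScont.const_smul _).intervalIntegrable τ t)).symm
        · refine sum_congr rfl fun k _ => ?_
          simp only [hSnrec, map_smul, intervalIntegral.integral_smul]
          module
    _ = ∫ u in τ..t, ((-Complex.I * g) • HI u (S u)
          - ∑ k ∈ range n, (-Complex.I * g) • HI u (g ^ k • Sn k u)) := by
        rw [← integral_finsetSum fun k _ => (hcont k).intervalIntegrable τ t]
        exact (integral_sub ((hScont.const_smul _).intervalIntegrable τ t)
          ((continuous_finsetSum _ fun k _ => hcont k).intervalIntegrable τ t)).symm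
    _ = _ := by simp only [map_sub, map_sum, smul_sub, smul_sum]

end

/-- Iterative (Dyson) expansion of the time-evolution operator with remainder
estimate: let `H_I(t)` be linear operators with `N₀(H_I(t)x) ≤ ‖x‖_𝔽` (operator
norm ≤ 1 from 𝔽 into `𝐅_{𝔅₀}`) and `N_{n+1}(H_I(t)x) ≤ N_n(x)` (mapping
`𝔅ₙ`-bounded sets into `𝔅_{n+1}`-bounded sets uniformly in `t`),
and suppose `t ↦ S_g(t)Φ` solves `S_g'(t)Φ = −i g H_I(t) S_g(t)Φ`,
`S_g(τ) = 1`, with `‖S_g(t)Φ‖ = ‖Φ‖`.  With `S_[0] = 1` and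
`S_[n](t) = −i ∫_τ^t H_I(u) S_[n−1](u) du`, for every `n` and `t ≥ τ`:
`‖(S_g(t) − Σ_{k=0}^n g^k S_[k](t))Φ‖_{𝔅ₙ}
  ≤ g^{n+1} (t−τ)^{n+1}/(n+1)! · ‖Φ‖_𝔽`. -/
theorem stmt_19 (E : Type*) [NormedAddCommGroup E] [NormedSpace ℂ E] [CompleteSpace E]
    (N : ℕ → Seminorm ℂ E) (hNcont : ∀ n, Continuous fun x => N n x)
    (HI : ℝ → E →ₗ[ℂ] E)
    (hH0 : ∀ (t : ℝ) (x : E), N 0 (HI t x) ≤ ‖x‖)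
    (hHn : ∀ (n : ℕ) (t : ℝ) (x : E), N (n + 1) (HI t x) ≤ N n x)
    (g τ : ℝ) (hg : 0 ≤ g)
    (Φ : E) (S : ℝ → E)
    (hS : ∀ t, HasDerivAt S (-((g : ℂ) • (Complex.I • HI t (S t)))) t)
    (hSτ : S τ = Φ)
    (hSnorm : ∀ t, ‖S t‖ = ‖Φ‖)
    (hScont : Continuous fun u => HI u (S u))
    (Sn : ℕ → ℝ → E)
    (hSn0 : ∀ t, Sn 0 t = Φ)
    (hSnrec : ∀ (n : ℕ) (t : ℝ),
      Sn (n + 1) t = -(Complex.I • ∫ u in τ..t, HI u (Sn n u)))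
    (hSncont : ∀ n : ℕ, Continuous fun u => HI u (Sn n u)) :
    ∀ (n : ℕ) (t : ℝ), τ ≤ t →
      N n (S t - ∑ k ∈ Finset.range (n + 1), (g : ℂ) ^ k • Sn k t)
        ≤ g ^ (n + 1) * (t - τ) ^ (n + 1) / (Nat.factorial (n + 1) : ℝ) * ‖Φ‖ := by
  have hSn0' : ∀ t, Sn 0 t = S τ := fun t => by rw [hSn0, hSτ]
  have hstep : ∀ n t, τ ≤ t →
      (∀ u ∈ Set.Icc τ t, N n (HI u (S u - ∑ k ∈ range n, (g : ℂ) ^ k • Sn k u))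
        ≤ g ^ n * ‖Φ‖ * ((u - τ) ^ n / n.factorial)) →
      N n (S t - ∑ k ∈ range (n + 1), (g : ℂ) ^ k • Sn k t)
        ≤ g ^ (n + 1) * (t - τ) ^ (n + 1) / ((n + 1).factorial : ℝ) * ‖Φ‖ := by
    intro n t ht hbd
    rw [dyson_remainder_succ_eq_integral HI g τ hS hScont hSn0' hSnrec hSncont]
    refine ((N n).intervalIntegral_smul_le_of_le_pow_div_factorial (hNcont n) _
      (continuous_apply_sub_sum HI hScont hSncont _ _) n ht hbd).trans_eq ?_
    simp only [neg_mul, norm_neg, Complex.norm_mul, Complex.norm_I, Complex.norm_real,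
      Real.norm_eq_abs, abs_of_nonneg hg, one_mul]
    ring
  intro n
  induction n with
  | zero => exact fun t ht => hstep 0 t ht fun u _ => by simpa [hSnorm u] using hH0 u (S u)
  | succ n ih =>
    exact fun t ht => hstep (n + 1) t ht fun u hu =>
      (hHn n u _).trans ((ih u hu.1).trans_eq (by ring))
end
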